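/- arXiv:2103.00512 — 2 statements merged into one kernel-verified Lean document; each statement's English description precedes it below -/
import Mathlib

section
/- For a random variable X on the circle [−π, π) with E[X] = 0, finite variance, and a continuous density f near −π with f(−π) = 0 or more generally 2π f(−π) < 1, the Hessian of the Fréchet function F(p) = E[d(X,p)²] at p = 0 equals 2(1 − 2π f(−π)). In particular F''(0) > 0. -/
open Real MeasureTheory Set Filter

open Topology intervalIntegral

lemma key_hasDerivAt (g : ℝ → ℝ) (hg : Integrable g) (c u : ℝ) :
    HasDerivAt (fun v => ∫ t in c..v, (t - v) * g t) (-(∫ t in c..u, g t)) u := by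
  have hgii : ∀ a b : ℝ, IntervalIntegrable g volume a b := fun a b => hg.intervalIntegrable
  have hii : ∀ a b : ℝ, ∀ w : ℝ, IntervalIntegrable (fun t => (t - w) * g t) volume a b :=
    fun a b w => (hgii a b).continuousOn_mul (by fun_prop)
  rw [hasDerivAt_iff_tendsto]
  have hbound : ∀ v : ℝ,
      ‖v - u‖⁻¹ * ‖(∫ t in c..v, (t - v) * g t) - (∫ t in c..u, (t - u) * g t)
        - (v - u) • (-(∫ t in c..u, g t))‖ ≤ |(∫ t in u..v, |g t|)| := by
    intro v
    rcases eq_or_ne v u with rfl | hvu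
    · simp
    have hkey : (∫ t in c..v, (t - v) * g t) - (∫ t in c..u, (t - u) * g t)
        - (v - u) • (-(∫ t in c..u, g t)) = ∫ t in u..v, (t - v) * g t := by
      have h1 : (∫ t in c..v, (t - v) * g t)
          = (∫ t in c..v, (t - u) * g t) - (v - u) * ∫ t in c..v, g t := by
        rw [← intervalIntegral.integral_const_mul, ← intervalIntegral.integral_sub (hii c v u)
          ((hgii c v).const_mul _)]
        congr 1; ext t; ring
      have h2 : (∫ t in c..v, (t - u) * g t)
          = (∫ t in c..u, (t - u) * g t) + ∫ t in u..v, (t - u) * g t :=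
        (intervalIntegral.integral_add_adjacent_intervals (hii c u u) (hii u v u)).symm
      have h3 : (∫ t in c..v, g t) = (∫ t in c..u, g t) + ∫ t in u..v, g t :=
        (intervalIntegral.integral_add_adjacent_intervals (hgii c u) (hgii u v)).symm
      have h4 : (∫ t in u..v, (t - u) * g t) - (v - u) * ∫ t in u..v, g t
          = ∫ t in u..v, (t - v) * g t := by
        rw [← intervalIntegral.integral_const_mul, ← intervalIntegral.integral_sub (hii u v u)
          ((hgii u v).const_mul _)]
        congr 1; ext t; ring
      rw [h1, h2, h3, smul_eq_mul, ← h4]; ring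
    rw [hkey]
    have hb : ‖∫ t in u..v, (t - v) * g t‖ ≤ |(∫ t in u..v, |v - u| * |g t|)| := by
      apply intervalIntegral.norm_integral_le_abs_of_norm_le _ ((hgii u v).norm.const_mul _)
      filter_upwards [ae_restrict_mem measurableSet_uIoc] with t ht
      have habs : |t - v| ≤ |v - u| := by
        rcases le_total u v with h | h
        · rw [abs_of_nonneg (sub_nonneg.2 h)] ; rw [uIoc_of_le h] at ht
          rw [abs_sub_le_iff]; exact ⟨by linarith [ht.1, ht.2], by linarith [ht.1, ht.2]⟩
        · rw [abs_of_nonpos (sub_nonpos.2 h), neg_sub]; rw [uIoc_of_ge h] at ht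
          rw [abs_sub_le_iff]; exact ⟨by linarith [ht.1, ht.2], by linarith [ht.1, ht.2]⟩
      calc ‖(t - v) * g t‖ = |t - v| * |g t| := abs_mul _ _
        _ ≤ |v - u| * |g t| := by gcongr
    rw [intervalIntegral.integral_const_mul, abs_mul, abs_abs] at hb
    rw [Real.norm_eq_abs, inv_mul_le_iff₀ (abs_pos.2 (sub_ne_zero.2 hvu))]
    linarith [hb]
  have hcont : Tendsto (fun v => |(∫ t in u..v, |g t|)|) (𝓝 u) (𝓝 0) := by
    have h0 : (|(∫ t in u..u, |g t|)|) = 0 := by simp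
    have := ((hg.norm.continuous_primitive u).tendsto u).abs
    simpa [h0] using this
  exact squeeze_zero' (Eventually.of_forall fun v => by positivity)
    (Eventually.of_forall hbound) hcont
noncomputable def circleDist (x y : ℝ) : ℝ := min |y - x| (2 * π - |y - x|)

/-- Hessian of the circular Fréchet function at the mean `0`:
`F''(0) = 2(1 − 2π f(−π)) > 0` when `2π f(−π) < 1`. -/
theorem circle_frechet_hessian
    (f : ℝ → ℝ) (hf_nonneg : ∀ x, 0 ≤ f x)
    (hf_density : ∫ x in Set.Ico (-π) π, f x = 1)
    (hf_mean : ∫ x in Set.Ico (-π) π, x * f x = 0)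
    (hf_cont_right : Tendsto f (nhdsWithin (-π) (Set.Ici (-π))) (nhds (f (-π))))
    (hf_cont_left : Tendsto f (nhdsWithin π (Set.Iio π)) (nhds (f (-π))))
    (hf_small : 2 * π * f (-π) < 1)
    (F : ℝ → ℝ) (hF : F = fun p => ∫ x in Set.Ico (-π) π, circleDist x p ^ 2 * f x) :
    iteratedDeriv 2 F 0 = 2 * (1 - 2 * π * f (-π)) ∧ 0 < iteratedDeriv 2 F 0 := by
  have hπ : (0:ℝ) < π := Real.pi_pos
  -- integrability of f
  have hf_int : IntegrableOn f (Ico (-π) π) := by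
    by_contra h
    rw [MeasureTheory.integral_undef h] at hf_density
    norm_num at hf_density
  set g : ℝ → ℝ := (Ico (-π) π).indicator f with hg_def
  have hg_int : Integrable g := by
    rw [hg_def, integrable_indicator_iff measurableSet_Ico]; exact hf_int
  have hg_eq : ∀ x ∈ Ico (-π) π, g x = f x := fun x hx => indicator_of_mem hx f
  have hg_zero : ∀ x, x ∉ Ico (-π) π → g x = 0 := fun x hx => indicator_of_notMem hx f
  set C : ℝ := ∫ x in Ico (-π) π, x ^ 2 * f x with hC_def
  set Φ : ℝ → ℝ → ℝ := fun c u => ∫ t in c..u, (t - u) * g t with hΦ_def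
  set A : ℝ → ℝ → ℝ := fun c u => ∫ t in c..u, g t with hA_def
  set G : ℝ → ℝ := fun p => C + p ^ 2 + 4 * π * Φ (-π) (p - π) + 4 * π * Φ π (p + π)
    with hG_def
  set G' : ℝ → ℝ := fun p => 2 * p - 4 * π * A (-π) (p - π) - 4 * π * A π (p + π)
    with hG'_def
  -- F agrees with G on Ioo (-π) π
  have hFG : ∀ p ∈ Ioo (-π) π, F p = G p := by
    intro p hp
    rw [hG_def]
    simp only
    obtain ⟨hp1, hp2⟩ := hp
    set t2 : ℝ → ℝ := (Iio (p - π)).indicator (fun x => 4 * π * (x - (p - π)) * f x) with ht2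
    set t3 : ℝ → ℝ := (Ici (p + π)).indicator (fun x => 4 * π * ((p + π) - x) * f x) with ht3
    -- pointwise identity
    have hpt : ∀ x ∈ Ico (-π) π,
        circleDist x p ^ 2 * f x = (x - p) ^ 2 * f x + t2 x + t3 x := by
      intro x hx
      obtain ⟨hx1, hx2⟩ := hx
      by_cases h1 : x < p - π
      · have hd : circleDist x p = 2 * π - (p - x) := by
          unfold circleDist
          rw [abs_of_nonneg (by linarith : (0:ℝ) ≤ p - x)]
          exact min_eq_right (by linarith)
        rw [hd, ht2, ht3, indicator_of_mem (by exact h1), indicator_of_notMem (by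
          simp only [mem_Ici, not_le]; linarith)]
        ring
      · by_cases h2 : p + π ≤ x
        · have hd : circleDist x p = 2 * π - (x - p) := by
            unfold circleDist
            rw [abs_of_nonpos (by linarith : p - x ≤ 0), neg_sub]
            exact min_eq_right (by linarith)
          rw [hd, ht2, ht3, indicator_of_notMem (by
            simp only [mem_Iio, not_lt]; linarith), indicator_of_mem (by exact h2)]
          ring
        · push_neg at h1 h2
          have habs : |p - x| ≤ π := abs_le.2 ⟨by linarith, by linarith⟩
          have hd : circleDist x p = |p - x| := by
            unfold circleDist
            exact min_eq_left (by linarith)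
          rw [ht2, ht3, indicator_of_notMem (by simp only [mem_Iio, not_lt]; linarith),
            indicator_of_notMem (by simp only [mem_Ici, not_le]; linarith), hd, sq_abs]
          ring
    -- integrability of the three pieces
    have hmf : AEStronglyMeasurable f (volume.restrict (Ico (-π) π)) := hf_int.aestronglyMeasurable
    have hint1 : IntegrableOn (fun x => (x - p) ^ 2 * f x) (Ico (-π) π) := by
      apply Integrable.mono' (hf_int.const_mul ((2 * π) ^ 2))
      · exact (Continuous.aestronglyMeasurable (by fun_prop)).mul hmf
      · filter_upwards [ae_restrict_mem measurableSet_Ico] with x hx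
        have : |x - p| ≤ 2 * π := by
          rw [abs_le]; constructor <;> [linarith [hx.1]; linarith [hx.2.le]]
        rw [Real.norm_eq_abs, abs_mul, abs_of_nonneg (hf_nonneg x),
          abs_of_nonneg (sq_nonneg (x - p))]
        have h2 : (x - p) ^ 2 ≤ (2 * π) ^ 2 := by
          nlinarith [sq_abs (x - p), abs_nonneg (x - p)]
        exact mul_le_mul_of_nonneg_right h2 (hf_nonneg x)
    have hint2 : IntegrableOn t2 (Ico (-π) π) := by
      apply Integrable.mono' (hf_int.const_mul (4 * π * (3 * π)))
      · exact ((Continuous.aestronglyMeasurable (by fun_prop)).mul hmf).indicator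
          measurableSet_Iio
      · filter_upwards [ae_restrict_mem measurableSet_Ico] with x hx
        rw [ht2, Real.norm_eq_abs]
        by_cases hxm : x ∈ Iio (p - π)
        · rw [indicator_of_mem hxm]
          rw [abs_mul, abs_of_nonneg (hf_nonneg x)]
          gcongr
          · exact hf_nonneg x
          · rw [abs_mul, abs_of_nonneg (by positivity : (0:ℝ) ≤ 4 * π)]
            gcongr
            rw [abs_le]; constructor <;> [linarith [hx.1]; linarith [hx.2.le]]
        · rw [indicator_of_notMem hxm]
          simp only [abs_zero]
          have := hf_nonneg x
          positivity
    have hint3 : IntegrableOn t3 (Ico (-π) π) := by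
      apply Integrable.mono' (hf_int.const_mul (4 * π * (3 * π)))
      · exact ((Continuous.aestronglyMeasurable (by fun_prop)).mul hmf).indicator
          measurableSet_Ici
      · filter_upwards [ae_restrict_mem measurableSet_Ico] with x hx
        rw [ht3, Real.norm_eq_abs]
        by_cases hxm : x ∈ Ici (p + π)
        · rw [indicator_of_mem hxm]
          rw [abs_mul, abs_of_nonneg (hf_nonneg x)]
          gcongr
          · exact hf_nonneg x
          · rw [abs_mul, abs_of_nonneg (by positivity : (0:ℝ) ≤ 4 * π)]
            gcongr
            rw [abs_le]; constructor <;> [linarith [hx.2.le]; linarith [hx.1]]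
        · rw [indicator_of_notMem hxm]
          simp only [abs_zero]
          have := hf_nonneg x
          positivity
    -- split the integral
    have hsplit : F p = (∫ x in Ico (-π) π, (x - p) ^ 2 * f x) + (∫ x in Ico (-π) π, t2 x)
        + ∫ x in Ico (-π) π, t3 x := by
      rw [hF]
      simp only
      have hint12 : IntegrableOn (fun x => (x - p) ^ 2 * f x + t2 x) (Ico (-π) π) :=
        hint1.add hint2
      rw [setIntegral_congr_fun measurableSet_Ico hpt, integral_add hint12 hint3,
        integral_add hint1 hint2]
    -- first piece
    have hI1 : (∫ x in Ico (-π) π, (x - p) ^ 2 * f x) = C + p ^ 2 := by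
      have hxf : IntegrableOn (fun x => x * f x) (Ico (-π) π) := by
        apply Integrable.mono' (hf_int.const_mul π)
        · exact (Continuous.aestronglyMeasurable (by fun_prop)).mul hmf
        · filter_upwards [ae_restrict_mem measurableSet_Ico] with x hx
          rw [Real.norm_eq_abs, abs_mul, abs_of_nonneg (hf_nonneg x)]
          gcongr
          · exact hf_nonneg x
          · rw [abs_le]; constructor <;> [linarith [hx.1]; linarith [hx.2.le]]
      have hx2f : IntegrableOn (fun x => x ^ 2 * f x) (Ico (-π) π) := by
        apply Integrable.mono' (hf_int.const_mul (π ^ 2))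
        · exact (Continuous.aestronglyMeasurable (by fun_prop)).mul hmf
        · filter_upwards [ae_restrict_mem measurableSet_Ico] with x hx
          rw [Real.norm_eq_abs, abs_mul, abs_of_nonneg (hf_nonneg x),
            abs_of_nonneg (sq_nonneg x)]
          have h2 : x ^ 2 ≤ π ^ 2 := by nlinarith [hx.1, hx.2.le]
          exact mul_le_mul_of_nonneg_right h2 (hf_nonneg x)
      have he : ∀ x ∈ Ico (-π) π, (x - p) ^ 2 * f x
          = x ^ 2 * f x + (-2 * p) * (x * f x) + p ^ 2 * f x := by
        intro x _; ring
      have hq1 : IntegrableOn (fun x => (-2 * p) * (x * f x)) (Ico (-π) π) :=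
        hxf.const_mul _
      have hq2 : IntegrableOn (fun x => p ^ 2 * f x) (Ico (-π) π) := hf_int.const_mul _
      have hq12 : IntegrableOn (fun x => x ^ 2 * f x + (-2 * p) * (x * f x)) (Ico (-π) π) :=
        hx2f.add hq1
      rw [setIntegral_congr_fun measurableSet_Ico he, integral_add hq12 hq2,
        integral_add hx2f hq1, MeasureTheory.integral_const_mul,
        MeasureTheory.integral_const_mul, hf_mean, hf_density, hC_def]
      ring
    -- second piece
    have hI2 : (∫ x in Ico (-π) π, t2 x) = 4 * π * Φ (-π) (p - π) := by
      rw [ht2, setIntegral_indicator measurableSet_Iio]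
      have hset : Ico (-π) π ∩ Iio (p - π) = Ico (-π) (p - π) := by
        rw [Ico_inter_Iio, min_eq_right (by linarith)]
      rw [hset]
      simp only [hΦ_def]
      by_cases hp0 : 0 ≤ p
      · rw [intervalIntegral.integral_of_le (by linarith), integral_Ico_eq_integral_Ioo,
          integral_Ioc_eq_integral_Ioo, ← MeasureTheory.integral_const_mul]
        apply setIntegral_congr_fun measurableSet_Ioo
        intro t ht
        simp only
        rw [hg_eq t ⟨ht.1.le, by linarith [ht.2]⟩]
        ring
      · push_neg at hp0
        rw [Ico_eq_empty (by linarith), intervalIntegral.integral_symm,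
          intervalIntegral.integral_of_le (by linarith), integral_Ioc_eq_integral_Ioo]
        have hz : ∀ t ∈ Ioo (p - π) (-π), (t - (p - π)) * g t = 0 := by
          intro t ht
          rw [hg_zero t (by simp only [mem_Ico]; push_neg; intro h; linarith [ht.2])]
          ring
        rw [setIntegral_congr_fun measurableSet_Ioo hz]
        simp
    -- third piece
    have hI3 : (∫ x in Ico (-π) π, t3 x) = 4 * π * Φ π (p + π) := by
      rw [ht3, setIntegral_indicator measurableSet_Ici]
      have hset : Ico (-π) π ∩ Ici (p + π) = Ico (p + π) π := by
        rw [Ico_inter_Ici, max_eq_right (by linarith)]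
      rw [hset]
      simp only [hΦ_def]
      by_cases hp0 : p ≤ 0
      · rw [intervalIntegral.integral_symm, intervalIntegral.integral_of_le (by linarith),
          integral_Ico_eq_integral_Ioo, integral_Ioc_eq_integral_Ioo, ← MeasureTheory.integral_neg,
          ← MeasureTheory.integral_const_mul]
        apply setIntegral_congr_fun measurableSet_Ioo
        intro t ht
        simp only
        rw [hg_eq t ⟨by linarith [ht.1], ht.2⟩]
        ring
      · push_neg at hp0
        rw [Ico_eq_empty (by simp only [not_lt]; linarith),
          intervalIntegral.integral_of_le (by linarith)]
        have hz : ∀ t ∈ Ioc π (p + π), (t - (p + π)) * g t = 0 := by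
          intro t ht
          rw [hg_zero t (by simp only [mem_Ico]; push_neg; intro h; linarith [ht.1])]
          ring
        rw [setIntegral_congr_fun measurableSet_Ioc hz]
        simp
    rw [hsplit, hI1, hI2, hI3]
  -- G has derivative G' everywhere
  have hG'at : ∀ p : ℝ, HasDerivAt G (G' p) p := by
    intro p
    have h1 : HasDerivAt (fun p : ℝ => Φ (-π) (p - π)) (-(A (-π) (p - π)) * 1) p :=
      HasDerivAt.comp (x := p) (h := fun x => id x - π) (key_hasDerivAt g hg_int (-π) (p - π))
        ((hasDerivAt_id p).sub_const π)
    have h2 : HasDerivAt (fun p : ℝ => Φ π (p + π)) (-(A π (p + π)) * 1) p :=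
      HasDerivAt.comp (x := p) (h := fun x => id x + π) (key_hasDerivAt g hg_int π (p + π))
        ((hasDerivAt_id p).add_const π)
    have := (((hasDerivAt_const p C).add (hasDerivAt_pow 2 p)).add
      (h1.const_mul (4 * π))).add (h2.const_mul (4 * π))
    refine HasDerivAt.congr_deriv this ?_
    simp [hG'_def]; ring
  -- deriv F = G' near 0
  have hne : Ioo (-π) π ∈ 𝓝 (0:ℝ) := isOpen_Ioo.mem_nhds ⟨by linarith, hπ⟩
  have hderivF : ∀ᶠ p in 𝓝 (0:ℝ), deriv F p = G' p := by
    filter_upwards [eventually_mem_nhds_iff.mpr hne] with p hp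
    have hFG' : F =ᶠ[𝓝 p] G := by
      filter_upwards [hp] with q hq using hFG q hq
    rw [hFG'.deriv_eq, (hG'at p).deriv]
  -- G' has derivative 2 - 4π f(-π) at 0
  have hG'' : HasDerivAt G' (2 - 4 * π * f (-π)) 0 := by
    have hmeas : ∀ l : Filter ℝ, StronglyMeasurableAtFilter g l volume :=
      fun l => ⟨univ, univ_mem, hg_int.aestronglyMeasurable.restrict⟩
    have hgfR : g =ᶠ[𝓝[>] (-π)] f := by
      filter_upwards [Ioo_mem_nhdsGT_of_mem (⟨le_refl _, by linarith⟩ : -π ∈ Ico (-π) π)]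
        with x hx
      exact hg_eq x ⟨hx.1.le, hx.2⟩
    have htR : Tendsto g (𝓝[>] (-π) ⊓ ae volume) (𝓝 (f (-π))) := by
      refine Tendsto.mono_left ?_ inf_le_left
      exact (hf_cont_right.mono_left (nhdsWithin_mono _ Ioi_subset_Ici_self)).congr'
        hgfR.symm
    have hFTC_R : HasDerivWithinAt (fun u => ∫ t in (-π)..u, g t) (f (-π)) (Ici (-π)) (-π) :=
      intervalIntegral.integral_hasDerivWithinAt_of_tendsto_ae_right
        hg_int.intervalIntegrable (hmeas _) htR
    -- left at π
    have hle : 𝓝[≤] π ⊓ ae volume ≤ 𝓝[Iio π] π := by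
      refine le_inf (inf_le_left.trans nhdsWithin_le_nhds) (le_principal_iff.2 ?_)
      have h1 : Iic π ∈ 𝓝[≤] π ⊓ ae volume := mem_inf_of_left self_mem_nhdsWithin
      have h2 : ({π}ᶜ : Set ℝ) ∈ 𝓝[≤] π ⊓ ae volume := by
        refine mem_inf_of_right ?_
        rw [mem_ae_iff]
        simp
      filter_upwards [h1, h2] with x hx1 hx2
      exact lt_of_le_of_ne hx1 hx2
    have hgfL : g =ᶠ[𝓝[≤] π ⊓ ae volume] f := by
      have hIoo : Ioo (-π) π ∈ 𝓝[Iio π] π :=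
        Ioo_mem_nhdsLT_of_mem ⟨by linarith, le_refl _⟩
      filter_upwards [hle hIoo] with x hx
      exact hg_eq x ⟨hx.1.le, hx.2⟩
    have htL : Tendsto g (𝓝[≤] π ⊓ ae volume) (𝓝 (f (-π))) :=
      (hf_cont_left.mono_left hle).congr' hgfL.symm
    have hFTC_L : HasDerivWithinAt (fun v => ∫ t in π..v, g t) (f (-π)) (Iic π) π :=
      intervalIntegral.integral_hasDerivWithinAt_of_tendsto_ae_right
        hg_int.intervalIntegrable (hmeas _) htL
    -- components
    have hW1_Ici : HasDerivWithinAt (fun p => A (-π) (p - π)) (f (-π) * 1) (Ici 0) 0 := by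
      rw [hA_def]
      have hmap : MapsTo (fun p : ℝ => p - π) (Ici 0) (Ici (-π)) := by
        intro x hx; simp only [mem_Ici] at *; linarith
      have hinner : HasDerivWithinAt (fun p : ℝ => p - π) 1 (Ici 0) 0 :=
        ((hasDerivAt_id 0).sub_const π).hasDerivWithinAt
      have := HasDerivWithinAt.comp (0:ℝ) (by simpa using hFTC_R) hinner hmap
      simpa [Function.comp_def] using this
    have hW1zero : ∀ p ≤ (0:ℝ), A (-π) (p - π) = 0 := by
      intro p hp
      rw [hA_def]
      simp only
      rw [intervalIntegral.integral_symm, intervalIntegral.integral_of_le (by linarith),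
        integral_Ioc_eq_integral_Ioo]
      rw [setIntegral_congr_fun measurableSet_Ioo (g := fun _ => (0:ℝ))
        (fun t ht => hg_zero t (by simp only [mem_Ico]; push_neg; intro h; linarith [ht.2]))]
      simp
    have hW1_Iic : HasDerivWithinAt (fun p => A (-π) (p - π)) 0 (Iic 0) 0 :=
      (hasDerivWithinAt_const 0 (Iic 0) 0).congr (fun p hp => hW1zero p hp) (hW1zero 0 le_rfl)
    have hW2_Iic : HasDerivWithinAt (fun p => A π (p + π)) (f (-π) * 1) (Iic 0) 0 := by
      rw [hA_def]
      have hmap : MapsTo (fun p : ℝ => p + π) (Iic 0) (Iic π) := by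
        intro x hx; simp only [mem_Iic] at *; linarith
      have hinner : HasDerivWithinAt (fun p : ℝ => p + π) 1 (Iic 0) 0 :=
        ((hasDerivAt_id 0).add_const π).hasDerivWithinAt
      have := HasDerivWithinAt.comp (0:ℝ) (by simpa using hFTC_L) hinner hmap
      simpa [Function.comp_def] using this
    have hW2zero : ∀ p, (0:ℝ) ≤ p → A π (p + π) = 0 := by
      intro p hp
      rw [hA_def]
      simp only
      rw [intervalIntegral.integral_of_le (by linarith)]
      rw [setIntegral_congr_fun measurableSet_Ioc (g := fun _ => (0:ℝ))
        (fun t ht => hg_zero t (by simp only [mem_Ico]; push_neg; intro h; linarith [ht.1]))]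
      simp
    have hW2_Ici : HasDerivWithinAt (fun p => A π (p + π)) 0 (Ici 0) 0 :=
      (hasDerivWithinAt_const 0 (Ici 0) 0).congr (fun p hp => hW2zero p hp) (hW2zero 0 le_rfl)
    have hIci : HasDerivWithinAt G' (2 - 4 * π * f (-π)) (Ici 0) 0 := by
      rw [hG'_def]
      have := (((hasDerivWithinAt_id (0:ℝ) (Ici 0)).const_mul 2).sub
        (hW1_Ici.const_mul (4 * π))).sub (hW2_Ici.const_mul (4 * π))
      refine HasDerivWithinAt.congr_deriv this ?_
      ring
    have hIic : HasDerivWithinAt G' (2 - 4 * π * f (-π)) (Iic 0) 0 := by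
      rw [hG'_def]
      have := (((hasDerivWithinAt_id (0:ℝ) (Iic 0)).const_mul 2).sub
        (hW1_Iic.const_mul (4 * π))).sub (hW2_Iic.const_mul (4 * π))
      refine HasDerivWithinAt.congr_deriv this ?_
      ring
    have := hIic.union hIci
    rw [Iic_union_Ici, hasDerivWithinAt_univ] at this
    exact this
  -- conclude
  have hd2 : deriv (deriv F) 0 = 2 - 4 * π * f (-π) := by
    have he : deriv F =ᶠ[𝓝 (0:ℝ)] G' := hderivF
    rw [he.deriv_eq, hG''.deriv]
  have hit : iteratedDeriv 2 F 0 = deriv (deriv F) 0 := by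
    rw [iteratedDeriv_succ, iteratedDeriv_one]
  constructor
  · rw [hit, hd2]; ring
  · rw [hit, hd2]; nlinarith
end

section
/- Let a(ψ, θ, φ) = arccos(cos ψ cos θ + sin ψ sin θ cos φ). For fixed θ ∈ (0, π) and φ ∈ (0, π), the second derivative in ψ of a²(ψ, θ, φ) at ψ = 0 equals 2(cos²φ + (θ cot θ) sin²φ). -/
open Real

theorem sq_sphereAngle_second_deriv (θ φ : ℝ) (hθ : θ ∈ Set.Ioo 0 π)
    (hφ : φ ∈ Set.Ioo 0 π) :
    iteratedDeriv 2
        (fun ψ => Real.arccos (Real.cos ψ * Real.cos θ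
          + Real.sin ψ * Real.sin θ * Real.cos φ) ^ 2) 0
      = 2 * (Real.cos φ ^ 2 + θ * (Real.cos θ / Real.sin θ) * Real.sin φ ^ 2) := by
  obtain ⟨hθ0, hθπ⟩ := hθ
  have hs : 0 < Real.sin θ := Real.sin_pos_of_pos_of_lt_pi hθ0 hθπ
  set c := Real.cos φ with hcdef
  set g : ℝ → ℝ := fun ψ => Real.cos ψ * Real.cos θ + Real.sin ψ * Real.sin θ * c
    with hgdef
  set g' : ℝ → ℝ := fun ψ => -Real.sin ψ * Real.cos θ + Real.cos ψ * Real.sin θ * c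
    with hg'def
  have hgd : ∀ ψ, HasDerivAt g (g' ψ) ψ := by
    intro ψ
    have := ((Real.hasDerivAt_cos ψ).mul_const (Real.cos θ)).add
      (((Real.hasDerivAt_sin ψ).mul_const (Real.sin θ)).mul_const c)
    convert this using 1
    · rfl
    · rfl
    rfl
  have hg0 : g 0 = Real.cos θ := by simp [hgdef]
  have hg'0 : g' 0 = Real.sin θ * c := by simp [hg'def]
  have hIoo : g 0 ∈ Set.Ioo (-1 : ℝ) 1 := by
    rw [hg0]
    constructor
    · have : Real.cos π < Real.cos θ :=
        Real.cos_lt_cos_of_nonneg_of_le_pi hθ0.le le_rfl hθπ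
      simpa using this
    · have : Real.cos θ < Real.cos 0 :=
        Real.cos_lt_cos_of_nonneg_of_le_pi le_rfl hθπ.le hθ0
      simpa using this
  -- the first derivative function
  set h : ℝ → ℝ := fun ψ =>
      2 * Real.arccos (g ψ) * (-(1 / Real.sqrt (1 - g ψ ^ 2)) * g' ψ) with hhdef
  have key : ∀ ψ, g ψ ∈ Set.Ioo (-1 : ℝ) 1 →
      HasDerivAt (fun ψ => Real.arccos (g ψ) ^ 2) (h ψ) ψ := by
    intro ψ hψ
    have harc : HasDerivAt (fun ψ => Real.arccos (g ψ))
        (-(1 / Real.sqrt (1 - g ψ ^ 2)) * g' ψ) ψ :=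
      (Real.hasDerivAt_arccos (ne_of_gt hψ.1) (ne_of_lt hψ.2)).comp ψ (hgd ψ)
    have := harc.pow 2
    convert this using 1
    · rfl
    · rfl
    · rfl
    simp [hhdef]
  have hgc : Continuous g := by
    apply Continuous.add
    · exact Real.continuous_cos.mul continuous_const
    · exact (Real.continuous_sin.mul continuous_const).mul continuous_const
  have hmem : ∀ᶠ ψ in nhds (0 : ℝ), g ψ ∈ Set.Ioo (-1 : ℝ) 1 :=
    hgc.continuousAt.preimage_mem_nhds (isOpen_Ioo.mem_nhds hIoo)
  have hev : deriv (fun ψ => Real.arccos (g ψ) ^ 2) =ᶠ[nhds (0 : ℝ)] h := by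
    filter_upwards [hmem] with ψ hψ
    exact (key ψ hψ).deriv
  have hit : iteratedDeriv 2 (fun ψ => Real.arccos (g ψ) ^ 2) 0
      = deriv (deriv (fun ψ => Real.arccos (g ψ) ^ 2)) 0 := by
    simp [iteratedDeriv_succ, iteratedDeriv_zero]
  rw [show (fun ψ => Real.arccos (Real.cos ψ * Real.cos θ
      + Real.sin ψ * Real.sin θ * Real.cos φ) ^ 2)
      = fun ψ => Real.arccos (g ψ) ^ 2 from rfl, hit, hev.deriv_eq]
  -- now compute deriv h 0
  have h1g : 1 - g 0 ^ 2 = Real.sin θ ^ 2 := by rw [hg0, ← Real.sin_sq]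
  have hqne : 1 - g 0 ^ 2 ≠ 0 := by rw [h1g]; positivity
  have hS : Real.sqrt (1 - g 0 ^ 2) = Real.sin θ := by
    rw [h1g, Real.sqrt_sq hs.le]
  have hSne : Real.sqrt (1 - g 0 ^ 2) ≠ 0 := by rw [hS]; exact hs.ne'
  have hq : HasDerivAt (fun ψ => 1 - g ψ ^ 2) (-(2 * g 0 ^ 1 * g' 0)) 0 :=
    ((hgd 0).pow 2).const_sub 1
  have hsq : HasDerivAt (fun ψ => Real.sqrt (1 - g ψ ^ 2))
      (1 / (2 * Real.sqrt (1 - g 0 ^ 2)) * -(2 * g 0 ^ 1 * g' 0)) 0 :=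
    (Real.hasDerivAt_sqrt hqne).comp 0 hq
  have hinv : HasDerivAt (fun ψ => 1 / Real.sqrt (1 - g ψ ^ 2))
      ((0 * Real.sqrt (1 - g 0 ^ 2)
        - 1 * (1 / (2 * Real.sqrt (1 - g 0 ^ 2)) * -(2 * g 0 ^ 1 * g' 0)))
        / Real.sqrt (1 - g 0 ^ 2) ^ 2) 0 :=
    (hasDerivAt_const 0 (1 : ℝ)).div hsq hSne
  have hgd' : HasDerivAt g' (-Real.cos 0 * Real.cos θ + -Real.sin 0 * Real.sin θ * c) 0 := by
    have := (((Real.hasDerivAt_sin 0).mul_const (Real.cos θ)).neg).add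
      (((Real.hasDerivAt_cos 0).mul_const (Real.sin θ)).mul_const c)
    convert this using 1
    · rfl
    · rfl
    · funext ψ; simp [hg'def]
    · ring
  have harc0 : HasDerivAt (fun ψ => Real.arccos (g ψ))
      (-(1 / Real.sqrt (1 - g 0 ^ 2)) * g' 0) 0 :=
    (Real.hasDerivAt_arccos (ne_of_gt hIoo.1) (ne_of_lt hIoo.2)).comp 0 (hgd 0)
  have hX : HasDerivAt (fun ψ => -(1 / Real.sqrt (1 - g ψ ^ 2)) * g' ψ)
      (-((0 * Real.sqrt (1 - g 0 ^ 2)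
        - 1 * (1 / (2 * Real.sqrt (1 - g 0 ^ 2)) * -(2 * g 0 ^ 1 * g' 0)))
        / Real.sqrt (1 - g 0 ^ 2) ^ 2) * g' 0
       + -(1 / Real.sqrt (1 - g 0 ^ 2))
         * (-Real.cos 0 * Real.cos θ + -Real.sin 0 * Real.sin θ * c)) 0 :=
    hinv.neg.mul hgd'
  have hh : HasDerivAt h
      (2 * (-(1 / Real.sqrt (1 - g 0 ^ 2)) * g' 0)
          * (-(1 / Real.sqrt (1 - g 0 ^ 2)) * g' 0)
        + 2 * Real.arccos (g 0)
          * (-((0 * Real.sqrt (1 - g 0 ^ 2)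
            - 1 * (1 / (2 * Real.sqrt (1 - g 0 ^ 2)) * -(2 * g 0 ^ 1 * g' 0)))
            / Real.sqrt (1 - g 0 ^ 2) ^ 2) * g' 0
           + -(1 / Real.sqrt (1 - g 0 ^ 2))
             * (-Real.cos 0 * Real.cos θ + -Real.sin 0 * Real.sin θ * c))) 0 := by
    have := (harc0.const_mul 2).mul hX
    convert this using 1
    · rfl
    · rfl
    rfl
  rw [hh.deriv]
  rw [hS, hg0, hg'0, Real.arccos_cos hθ0.le hθπ.le]
  have hsin2 : Real.sin φ ^ 2 = 1 - c ^ 2 := by rw [hcdef, Real.sin_sq]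
  rw [hsin2]
  simp only [Real.cos_zero, Real.sin_zero, pow_one]
  field_simp
  ring
end
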